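/- Let n ≥ 1 and let F : (0, ∞) → ℝ be differentiable and satisfy F'(t) ≥ (2/n) F(t)² for all t > 0. Then −n/(2t) ≤ F(t) ≤ 0 for all t > 0. -/

import Mathlib

/-!
Along any interval where `F` does not vanish, `F' ≥ c F²` says that `1 / F + c t` is
nonincreasing, i.e. `1 / F` drops at least at rate `c`. Since `F' ≥ 0`, `F` keeps the sign it has
at a point on everything to the right (if positive) or to the left (if negative) of that point.
A positive value `F s` would then force `1 / F` to reach `0` by time `s + 1 / (c F s)`, and a
value `F t₀ < -1 / (c t₀)` would force `1 / F` to be positive somewhere in `(0, t₀)`.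
-/

open Set

section Riccati

variable {F F' : ℝ → ℝ} {a c : ℝ} {s : Set ℝ}

lemma monotoneOn_of_mul_sq_le_deriv (hs : Convex ℝ s) (hc : 0 ≤ c)
    (hderiv : ∀ t ∈ s, HasDerivAt F (F' t) t) (hineq : ∀ t ∈ s, c * F t ^ 2 ≤ F' t) :
    MonotoneOn F s :=
  monotoneOn_of_hasDerivWithinAt_nonneg hs
    (fun t ht => (hderiv t ht).continuousAt.continuousWithinAt)
    (fun t ht => (hderiv t (interior_subset ht)).hasDerivWithinAt)
    (fun t ht => (by positivity : 0 ≤ c * F t ^ 2).trans (hineq t (interior_subset ht)))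

lemma antitoneOn_inv_add_mul_of_mul_sq_le_deriv (hs : Convex ℝ s)
    (hderiv : ∀ t ∈ s, HasDerivAt F (F' t) t) (hineq : ∀ t ∈ s, c * F t ^ 2 ≤ F' t)
    (hF : ∀ t ∈ s, F t ≠ 0) :
    AntitoneOn (fun t => (F t)⁻¹ + c * t) s := by
  have hderiv' : ∀ t ∈ s,
      HasDerivAt (fun t => (F t)⁻¹ + c * t) (-F' t / F t ^ 2 + c * 1) t := fun t ht =>
    ((hderiv t ht).inv (hF t ht)).add ((hasDerivAt_id t).const_mul c)
  refine antitoneOn_of_hasDerivWithinAt_nonpos hs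
    (fun t ht => (hderiv' t ht).continuousAt.continuousWithinAt)
    (fun t ht => (hderiv' t (interior_subset ht)).hasDerivWithinAt) fun t ht => ?_
  have hsq : 0 < F t ^ 2 := sq_pos_of_ne_zero (hF t (interior_subset ht))
  rw [mul_one, neg_div, neg_add_nonpos_iff, le_div_iff₀ hsq]
  exact hineq t (interior_subset ht)

lemma nonpos_of_mul_sq_le_deriv (hc : 0 < c)
    (hderiv : ∀ t ∈ Ioi a, HasDerivAt F (F' t) t) (hineq : ∀ t ∈ Ioi a, c * F t ^ 2 ≤ F' t) :
    ∀ t ∈ Ioi a, F t ≤ 0 := by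
  intro s hs
  by_contra! hFs
  have hsub : Ici s ⊆ Ioi a := Ici_subset_Ioi.mpr hs
  have hpos : ∀ t ∈ Ici s, 0 < F t := fun t ht =>
    hFs.trans_le <| monotoneOn_of_mul_sq_le_deriv (convex_Ioi a) hc.le hderiv hineq
      hs (hsub ht) ht
  have hanti := antitoneOn_inv_add_mul_of_mul_sq_le_deriv (convex_Ici s)
    (fun t ht => hderiv t (hsub ht)) (fun t ht => hineq t (hsub ht))
    (fun t ht => (hpos t ht).ne')
  set T := s + (c * F s)⁻¹
  have hsT : s ≤ T := le_add_of_nonneg_right (by positivity)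
  have hdrop : (F T)⁻¹ + c * T ≤ (F s)⁻¹ + c * s := hanti self_mem_Ici hsT hsT
  have hcT : c * T = c * s + (F s)⁻¹ := by
    simp only [T]
    field_simp
  have : 0 < (F T)⁻¹ := inv_pos.mpr (hpos T hsT)
  linarith

lemma neg_inv_le_of_mul_sq_le_deriv (hc : 0 < c)
    (hderiv : ∀ t ∈ Ioi a, HasDerivAt F (F' t) t) (hineq : ∀ t ∈ Ioi a, c * F t ^ 2 ≤ F' t) :
    ∀ t ∈ Ioi a, -(c * (t - a))⁻¹ ≤ F t := by
  intro t₀ ht₀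
  by_contra! hF₀
  have hct₀ : 0 < c * (t₀ - a) := mul_pos hc (sub_pos.mpr ht₀)
  have hneg₀ : F t₀ < 0 := hF₀.trans (neg_neg_of_pos (inv_pos.mpr hct₀))
  have hsub : Ioc a t₀ ⊆ Ioi a := Ioc_subset_Ioi_self
  have hneg : ∀ t ∈ Ioc a t₀, F t < 0 := fun t ht =>
    (monotoneOn_of_mul_sq_le_deriv (convex_Ioi a) hc.le hderiv hineq
      (hsub ht) ht₀ ht.2).trans_lt hneg₀
  have hanti := antitoneOn_inv_add_mul_of_mul_sq_le_deriv (convex_Ioc a t₀)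
    (fun t ht => hderiv t (hsub ht)) (fun t ht => hineq t (hsub ht))
    (fun t ht => (hneg t ht).ne)
  set δ := (F t₀)⁻¹ + c * (t₀ - a)
  have hδ : 0 < δ := by
    have := (inv_lt_inv_of_neg (neg_neg_of_pos (inv_pos.mpr hct₀)) hneg₀).mpr hF₀
    rw [inv_neg, inv_inv] at this
    simp only [δ]
    linarith
  have hδt₀ : δ < c * (t₀ - a) := by
    have := inv_lt_zero.mpr hneg₀
    simp only [δ]
    linarith
  set t := a + δ / (2 * c)
  have hcδ : c * (δ / (2 * c)) = δ / 2 := by field_simp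
  have ht : t ∈ Ioc a t₀ := by
    refine ⟨lt_add_of_pos_right a (by positivity), ?_⟩
    nlinarith
  have hrise : (F t₀)⁻¹ + c * t₀ ≤ (F t)⁻¹ + c * t :=
    hanti ht (right_mem_Ioc.mpr ht₀) ht.2
  have : (F t)⁻¹ < 0 := inv_lt_zero.mpr (hneg t ht)
  simp only [t, δ] at hrise hcδ
  linarith

end Riccati

/-- ODE comparison: if `F` is differentiable on `(0,∞)` with
`F' ≥ (2/n) F²` there, then `-n/(2t) ≤ F t ≤ 0` for all `t > 0`. -/
theorem stmt_0 (n : ℝ) (hn : 1 ≤ n) (F F' : ℝ → ℝ)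
    (hderiv : ∀ t ∈ Ioi (0 : ℝ), HasDerivAt F (F' t) t)
    (hineq : ∀ t ∈ Ioi (0 : ℝ), (2 / n) * (F t) ^ 2 ≤ F' t) :
    ∀ t ∈ Ioi (0 : ℝ), -n / (2 * t) ≤ F t ∧ F t ≤ 0 := by
  have hc : 0 < 2 / n := div_pos two_pos (zero_lt_one.trans_le hn)
  intro t ht
  have hbound : -n / (2 * t) = -(2 / n * (t - 0))⁻¹ := by
    rw [sub_zero]
    field_simp
  exact ⟨hbound ▸ neg_inv_le_of_mul_sq_le_deriv hc hderiv hineq t ht,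
    nonpos_of_mul_sq_le_deriv hc hderiv hineq t ht⟩
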